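/- arXiv:2510.03861 — 2 statements merged into one kernel-verified Lean document; each statement's English description precedes it below -/
import Mathlib

section
/- Let f : ℝⁿ × ℝᵐ → ℝ, X ⊆ ℝⁿ closed, Y : ℝⁿ ⇉ ℝᵐ with closed values, and (x̄, ȳ) ∈ X × Y(x̄). Suppose there exist δ₀ > 0 and ε₀ > 0 such that f(x̄, y) ≤ f(x̄, ȳ) ≤ V_{ε₀}(x) for all x ∈ X ∩ 𝔹_{δ₀}(x̄) and y ∈ Y(x̄) ∩ 𝔹_{δ₀}(ȳ), and suppose there exist κ > 0, δ₁ > 0 and a single-valued map y(·) with ‖y(x) − ȳ‖ ≤ κ‖x − x̄‖ for all x ∈ 𝔹_{δ₁}(x̄) such that the solution mapping satisfies S_{ε₀}(x) := argmax_{y' ∈ Y(x) ∩ 𝔹_{ε₀}(ȳ)} f(x, y') = {y(x)} for all x sufficiently close to x̄. Then (x̄, ȳ) is a calm local minimax point of min_{x∈X} max_{y∈Y(x)} f(x,y). -/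
open Filter Topology Set Metric Classical
open scoped RealInnerProductSpace

noncomputable section

/-- Euclidean space ℝ^n. -/
abbrev Eu (n : ℕ) := EuclideanSpace ℝ (Fin n)

/-- The filter describing `t ↓ 0, w' → w`. -/
def quotFilter {E : Type*} [TopologicalSpace E] (w : E) : Filter (ℝ × E) :=
  (𝓝[>] (0 : ℝ)) ×ˢ 𝓝 w

section Normed

variable {E F : Type*} [NormedAddCommGroup E] [NormedSpace ℝ E]
  [NormedAddCommGroup F] [NormedSpace ℝ F]

/-- Subderivative `dψ(z)(w) = liminf_{t↓0, w'→w} (ψ(z+tw')-ψ(z))/t`, in `EReal`. -/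
def dsub (ψ : E → ℝ) (z w : E) : EReal :=
  liminf (fun p : ℝ × E => (((ψ (z + p.1 • p.2) - ψ z) / p.1 : ℝ) : EReal)) (quotFilter w)

/-- Superderivative `d⁺ψ(z)(w) = limsup_{t↓0, w'→w} (ψ(z+tw')-ψ(z))/t`, in `EReal`. -/
def dsup (ψ : E → ℝ) (z w : E) : EReal :=
  limsup (fun p : ℝ × E => (((ψ (z + p.1 • p.2) - ψ z) / p.1 : ℝ) : EReal)) (quotFilter w)

/-- `ψ` is semidifferentiable at `z`: for every `w` the limit of the difference
quotients exists (as a real number). -/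
def SemidiffAt (ψ : E → ℝ) (z : E) : Prop :=
  ∀ w, ∃ L : ℝ,
    Tendsto (fun p : ℝ × E => (ψ (z + p.1 • p.2) - ψ z) / p.1) (quotFilter w) (𝓝 L)

/-- Second subderivative `d²ψ(z)(w)` (without mention of a vector), in `EReal`. -/
def d2sub (ψ : E → ℝ) (z w : E) : EReal :=
  liminf (fun p : ℝ × E =>
      (((ψ (z + p.1 • p.2) - ψ z - p.1 * (dsub ψ z p.2).toReal) / (p.1 ^ 2 / 2) : ℝ) : EReal))
    (quotFilter w)

/-- `ψ` is twice semidifferentiable at `z`. -/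
def TwiceSemidiffAt (ψ : E → ℝ) (z : E) : Prop :=
  SemidiffAt ψ z ∧ ∀ w, ∃ Q : ℝ,
    Tendsto (fun p : ℝ × E =>
        (ψ (z + p.1 • p.2) - ψ z - p.1 * (dsub ψ z p.2).toReal) / (p.1 ^ 2 / 2))
      (quotFilter w) (𝓝 Q)

/-- Second subderivative of the indicator function `δ_S` at `z` for the
(pre-)derivative function `d` and direction `w`:
`liminf_{t↓0, w'→w} (δ_S(z+tw') - t d(w'))/(t²/2)`. -/
def d2IndSub (S : Set E) (d : E → ℝ) (z w : E) : EReal :=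
  liminf (fun p : ℝ × E =>
      if z + p.1 • p.2 ∈ S then (((-(p.1 * d p.2)) / (p.1 ^ 2 / 2) : ℝ) : EReal)
      else (⊤ : EReal))
    (quotFilter w)

/-- Tangent (contingent) cone via sequences. -/
def tCone (S : Set E) (z : E) : Set E :=
  {w | ∃ (t : ℕ → ℝ) (w' : ℕ → E), (∀ k, 0 < t k) ∧ Tendsto t atTop (𝓝 0) ∧
    Tendsto w' atTop (𝓝 w) ∧ ∀ k, z + t k • w' k ∈ S}

/-- Inner tangent cone via sequences. -/
def innerTCone (S : Set E) (z : E) : Set E :=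
  {w | ∀ t : ℕ → ℝ, (∀ k, 0 < t k) → Tendsto t atTop (𝓝 0) →
    ∃ w' : ℕ → E, Tendsto w' atTop (𝓝 w) ∧ ∀ k, z + t k • w' k ∈ S}

/-- A set is geometrically derivable if tangent and inner tangent cones coincide
at every point of the set. -/
def GeomDerivable (S : Set E) : Prop := ∀ z ∈ S, tCone S z = innerTCone S z

/-- Graphical derivative (Painlevé–Kuratowski outer limit of difference quotients). -/
def graphDeriv (Y : E → Set F) (xb : E) (yb : F) (u : E) : Set F :=
  {h | ∃ (t : ℕ → ℝ) (u' : ℕ → E) (h' : ℕ → F),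
    (∀ k, 0 < t k) ∧ Tendsto t atTop (𝓝 0) ∧ Tendsto u' atTop (𝓝 u) ∧
    Tendsto h' atTop (𝓝 h) ∧ ∀ k, yb + t k • h' k ∈ Y (xb + t k • u' k)}

/-- Painlevé–Kuratowski inner limit of the difference quotients of a set-valued map. -/
def innerDeriv (Y : E → Set F) (xb : E) (yb : F) (u : E) : Set F :=
  {h | ∀ (t : ℕ → ℝ) (u' : ℕ → E), (∀ k, 0 < t k) → Tendsto t atTop (𝓝 0) →
    Tendsto u' atTop (𝓝 u) →
    ∃ h' : ℕ → F, Tendsto h' atTop (𝓝 h) ∧ ∀ k, yb + t k • h' k ∈ Y (xb + t k • u' k)}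

/-- `Y` is semidifferentiable at `xb` for `yb`: for every `u` the limit of the
difference quotient sets exists, i.e. outer and inner limits coincide. -/
def SetSemidiffAt (Y : E → Set F) (xb : E) (yb : F) : Prop :=
  ∀ u, graphDeriv Y xb yb u = innerDeriv Y xb yb u

/-- `Y` is calm around `(xb, yb)`. -/
def SetCalmAround (Y : E → Set F) (xb : E) (yb : F) : Prop :=
  ∃ l > (0 : ℝ), ∃ U ∈ 𝓝 xb, ∃ V ∈ 𝓝 yb, ∀ x ∈ U, ∀ y ∈ Y x ∩ V, ‖y - yb‖ ≤ l * ‖x - xb‖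

/-- `Y` is Lipschitz-like (Aubin property) around `(xb, yb)`. -/
def SetLipschitzLikeAround (Y : E → Set F) (xb : E) (yb : F) : Prop :=
  ∃ l > (0 : ℝ), ∃ U ∈ 𝓝 xb, ∃ V ∈ 𝓝 yb, ∀ x ∈ U, ∀ x' ∈ U, ∀ y ∈ Y x ∩ V,
    ∃ y' ∈ Y x', ‖y - y'‖ ≤ l * ‖x - x'‖

/-- Inner calmness of a set-valued map at `(xb, yb)` with respect to `X`. -/
def InnerCalmOn (Γ : E → Set F) (X : Set E) (xb : E) (yb : F) : Prop :=
  ∃ κ > (0 : ℝ), ∃ δ₀ > (0 : ℝ), ∀ x ∈ X ∩ closedBall xb δ₀,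
    ∃ y ∈ Γ x, ‖y - yb‖ ≤ κ * ‖x - xb‖

/-- Value of the (localized) maximization `max_{y ∈ A} f(x, y)`. -/
def maxVal (f : E × F → ℝ) (x : E) (A : Set F) : ℝ := sSup ((fun y => f (x, y)) '' A)

/-- Solution set of the maximization `max_{y ∈ A} f(x, y)`. -/
def argmaxSet (f : E × F → ℝ) (x : E) (A : Set F) : Set F :=
  {y ∈ A | ∀ y' ∈ A, f (x, y') ≤ f (x, y)}

/-- The defining inequalities of a local minimax point, for radius `δ₀` and radius
function `τ`. -/
def MinimaxIneq (f : E × F → ℝ) (X : Set E) (Y : E → Set F) (xb : E) (yb : F)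
    (δ₀ : ℝ) (τ : ℝ → ℝ) : Prop :=
  ∀ δ ∈ Ioc (0 : ℝ) δ₀, ∀ x ∈ X ∩ closedBall xb δ, ∀ y ∈ Y xb ∩ closedBall yb δ,
    f (xb, y) ≤ f (xb, yb) ∧ f (xb, yb) ≤ maxVal f x (Y x ∩ closedBall yb (τ δ))

/-- Local minimax point. -/
def IsLocalMinimaxPt (f : E × F → ℝ) (X : Set E) (Y : E → Set F) (xb : E) (yb : F) : Prop :=
  xb ∈ X ∧ yb ∈ Y xb ∧ ∃ δ₀ > (0 : ℝ), ∃ τ : ℝ → ℝ, (∀ δ, 0 ≤ τ δ) ∧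
    Tendsto τ (𝓝[>] (0 : ℝ)) (𝓝 0) ∧ MinimaxIneq f X Y xb yb δ₀ τ

/-- Calm local minimax point: a local minimax point whose radius function is calm at 0. -/
def IsCalmLocalMinimaxPt (f : E × F → ℝ) (X : Set E) (Y : E → Set F) (xb : E) (yb : F) : Prop :=
  xb ∈ X ∧ yb ∈ Y xb ∧ ∃ δ₀ > (0 : ℝ), ∃ τ : ℝ → ℝ, (∀ δ, 0 ≤ τ δ) ∧
    Tendsto τ (𝓝[>] (0 : ℝ)) (𝓝 0) ∧ (∃ κ > (0 : ℝ), ∀ δ ≥ (0 : ℝ), τ δ ≤ κ * δ) ∧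
    MinimaxIneq f X Y xb yb δ₀ τ

/-- Second-order growth condition at a (calm local) minimax point. -/
def SecondOrderGrowth (f : E × F → ℝ) (X : Set E) (Y : E → Set F) (xb : E) (yb : F) : Prop :=
  ∃ δ₀ > (0 : ℝ), ∃ ε > (0 : ℝ), ∃ μ > (0 : ℝ), ∃ κ > (0 : ℝ),
    ∀ x ∈ X ∩ closedBall xb δ₀, ∀ y ∈ Y xb ∩ closedBall yb δ₀,
      f (xb, y) + ε * ‖y - yb‖ ^ 2 ≤ f (xb, yb) ∧
      f (xb, yb) ≤ maxVal f x (Y x ∩ closedBall yb (κ * ‖x - xb‖)) - μ * ‖x - xb‖ ^ 2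

end Normed

section InnerP

variable {E F : Type*} [NormedAddCommGroup E] [InnerProductSpace ℝ E]
  [NormedAddCommGroup F] [InnerProductSpace ℝ F]

/-- Second subderivative of the indicator `δ_S` at `z` for a vector `v` and direction `w`. -/
def d2IndVec (S : Set E) (z v w : E) : EReal :=
  d2IndSub S (fun w' => ⟪v, w'⟫) z w

/-- Regular (Fréchet) normal cone, via polarity with the tangent cone. -/
def regNCone (S : Set E) (z : E) : Set E :=
  {v | ∀ w ∈ tCone S z, ⟪v, w⟫ ≤ 0}

/-- Limiting (Mordukhovich) normal cone. -/
def limNCone (S : Set E) (z : E) : Set E :=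
  {v | ∃ (zk : ℕ → E) (vk : ℕ → E), (∀ k, zk k ∈ S) ∧ Tendsto zk atTop (𝓝 z) ∧
    Tendsto vk atTop (𝓝 v) ∧ ∀ k, vk k ∈ regNCone S (zk k)}

/-- Normal cone of convex analysis. -/
def convNCone (D : Set E) (d : E) : Set E :=
  {v | ∀ z ∈ D, ⟪v, z - d⟫ ≤ 0}

/-- The inner product on a product of inner product spaces (ℓ²-pairing). -/
def pairInner (a b : E × F) : ℝ := ⟪a.1, b.1⟫ + ⟪a.2, b.2⟫

/-- Regular (Fréchet) normal cone for subsets of a product space. -/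
def regNConeP (S : Set (E × F)) (z : E × F) : Set (E × F) :=
  {v | ∀ w ∈ tCone S z, pairInner v w ≤ 0}

/-- Limiting normal cone for subsets of a product space. -/
def limNConeP (S : Set (E × F)) (z : E × F) : Set (E × F) :=
  {v | ∃ (zk : ℕ → E × F) (vk : ℕ → E × F), (∀ k, zk k ∈ S) ∧ Tendsto zk atTop (𝓝 z) ∧
    Tendsto vk atTop (𝓝 v) ∧ ∀ k, vk k ∈ regNConeP S (zk k)}

end InnerP

/-- Graph of a set-valued map. -/
def gphSet {E F : Type*} (Y : E → Set F) : Set (E × F) := {p : E × F | p.2 ∈ Y p.1}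

/-- If the localized minimax inequalities hold with a fixed radius `ε₀`
and the localized solution mapping `S_{ε₀}` admits a single-valued localization `y(·)`
satisfying a calmness bound, then `(xb, yb)` is a calm local minimax point. -/
theorem calmLocalMinimax_of_singleValued_solution_map
    {n m : ℕ} (f : Eu n × Eu m → ℝ) (X : Set (Eu n)) (Y : Eu n → Set (Eu m))
    (xb : Eu n) (yb : Eu m) (hX : IsClosed X) (hY : ∀ x, IsClosed (Y x))
    (hxb : xb ∈ X) (hyb : yb ∈ Y xb)
    (δ₀ ε₀ : ℝ) (hδ₀ : 0 < δ₀) (hε₀ : 0 < ε₀)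
    (hineq : ∀ x ∈ X ∩ closedBall xb δ₀, ∀ y ∈ Y xb ∩ closedBall yb δ₀,
      f (xb, y) ≤ f (xb, yb) ∧ f (xb, yb) ≤ maxVal f x (Y x ∩ closedBall yb ε₀))
    (κ δ₁ : ℝ) (hκ : 0 < κ) (hδ₁ : 0 < δ₁) (ysel : Eu n → Eu m)
    (hbound : ∀ x ∈ closedBall xb δ₁, ‖ysel x - yb‖ ≤ κ * ‖x - xb‖)
    (hsingle : ∀ᶠ x in 𝓝 xb, argmaxSet f x (Y x ∩ closedBall yb ε₀) = {ysel x}) :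
    IsCalmLocalMinimaxPt f X Y xb yb := by
  obtain ⟨r, hr, hsr⟩ := Metric.eventually_nhds_iff.1 hsingle
  set δ' : ℝ := min (min δ₀ δ₁) (r / 2) with hδ'def
  have hδ' : 0 < δ' := lt_min (lt_min hδ₀ hδ₁) (by linarith)
  refine ⟨hxb, hyb, δ', hδ', fun δ => min (κ * max δ 0) ε₀, ?_, ?_, ?_, ?_⟩
  · intro δ
    exact le_min (mul_nonneg hκ.le (le_max_right _ _)) hε₀.le
  · have hcont : Continuous fun δ : ℝ => min (κ * max δ 0) ε₀ := by
      fun_prop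
    have := hcont.tendsto 0
    simp only [max_self, mul_zero, min_eq_left hε₀.le, max_eq_right le_rfl,
      le_refl] at this
    exact this.mono_left nhdsWithin_le_nhds
  · refine ⟨κ, hκ, fun δ hδ => ?_⟩
    calc min (κ * max δ 0) ε₀ ≤ κ * max δ 0 := min_le_left _ _
      _ = κ * δ := by rw [max_eq_left hδ]
  · rintro δ ⟨hδpos, hδle⟩ x ⟨hxX, hxball⟩ y ⟨hyY, hyball⟩
    have hxδ₀ : x ∈ closedBall xb δ₀ :=
      closedBall_subset_closedBall (hδle.trans ((min_le_left _ _).trans (min_le_left _ _))) hxball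
    have hxδ₁ : x ∈ closedBall xb δ₁ :=
      closedBall_subset_closedBall (hδle.trans ((min_le_left _ _).trans (min_le_right _ _))) hxball
    have hxr : dist x xb < r := by
      have : dist x xb ≤ δ' := le_trans hxball hδle
      have : dist x xb ≤ r / 2 := this.trans (min_le_right _ _)
      linarith
    have hyδ₀ : y ∈ closedBall yb δ₀ :=
      closedBall_subset_closedBall (hδle.trans ((min_le_left _ _).trans (min_le_left _ _))) hyball
    have harg := hsr hxr
    have hysel : ysel x ∈ argmaxSet f x (Y x ∩ closedBall yb ε₀) := by
      rw [harg]; exact rfl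
    obtain ⟨⟨hyselY, hyselball⟩, hyselmax⟩ := hysel
    constructor
    · exact (hineq xb ⟨hxb, mem_closedBall_self hδ₀.le⟩ y ⟨hyY, hyδ₀⟩).1
    · -- f (xb, yb) ≤ maxVal over small ball
      have h1 : f (xb, yb) ≤ maxVal f x (Y x ∩ closedBall yb ε₀) :=
        (hineq x ⟨hxX, hxδ₀⟩ y ⟨hyY, hyδ₀⟩).2
      have h2 : maxVal f x (Y x ∩ closedBall yb ε₀) ≤ f (x, ysel x) := by
        unfold maxVal
        refine csSup_le ⟨f (x, ysel x), mem_image_of_mem _ ⟨hyselY, hyselball⟩⟩ ?_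
        rintro a ⟨y', hy', rfl⟩
        exact hyselmax y' hy'
      have hτε : min (κ * max δ 0) ε₀ ≤ ε₀ := min_le_right _ _
      have hselmem : ysel x ∈ Y x ∩ closedBall yb (min (κ * max δ 0) ε₀) := by
        refine ⟨hyselY, ?_⟩
        rw [mem_closedBall, dist_eq_norm]
        refine le_min ?_ (by simpa [dist_eq_norm] using hyselball)
        calc ‖ysel x - yb‖ ≤ κ * ‖x - xb‖ := hbound x hxδ₁
          _ ≤ κ * max δ 0 := by
              apply mul_le_mul_of_nonneg_left _ hκ.le
              have : ‖x - xb‖ ≤ δ := by simpa [dist_eq_norm] using hxball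
              exact this.trans (le_max_left _ _)
      have hsubset : Y x ∩ closedBall yb (min (κ * max δ 0) ε₀) ⊆
          Y x ∩ closedBall yb ε₀ :=
        inter_subset_inter_right _ (closedBall_subset_closedBall hτε)
      have hbdd : BddAbove ((fun y => f (x, y)) '' (Y x ∩ closedBall yb (min (κ * max δ 0) ε₀))) := by
        refine ⟨f (x, ysel x), ?_⟩
        rintro a ⟨y', hy', rfl⟩
        exact hyselmax y' (hsubset hy')
      have h3 : f (x, ysel x) ≤ maxVal f x (Y x ∩ closedBall yb (min (κ * max δ 0) ε₀)) := by
        unfold maxVal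
        exact le_csSup hbdd (mem_image_of_mem _ hselmem)
      exact h1.trans (h2.trans h3)
end
end

section
/- Let (x̄, ȳ) ∈ X × Y(x̄) with X ⊆ ℝⁿ closed and Y : ℝⁿ ⇉ ℝᵐ closed-valued. Suppose f is semidifferentiable at (x̄, ȳ), Y is semidifferentiable at x̄ for ȳ and calm around (x̄, ȳ), and that sup_{h ∈ DY(x̄, ȳ)(u)} df(x̄, ȳ)(u, h) > 0 for all u ∈ T_X(x̄) \ {0} and d_y f(x̄, ȳ)(h) < 0 for all h ∈ T_{Y(x̄)}(ȳ) \ {0}. Then (x̄, ȳ) is a calm local minimax point of min_{x∈X} max_{y∈Y(x)} f(x,y). -/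
open Filter Topology Set Metric Classical
open scoped RealInnerProductSpace

noncomputable section

section AuxLemmas
variable {E : Type*} [NormedAddCommGroup E] [NormedSpace ℝ E]

instance quotFilter_neBot (w : E) : (quotFilter w).NeBot := by
  unfold quotFilter; infer_instance

lemma tendsto_quotFilter {w : E} {t : ℕ → ℝ} {w' : ℕ → E}
    (ht0 : ∀ k, 0 < t k) (ht : Tendsto t atTop (𝓝 0))
    (hw : Tendsto w' atTop (𝓝 w)) :
    Tendsto (fun k => (t k, w' k)) atTop (quotFilter w) := by
  refine Tendsto.prodMk ?_ hw
  exact tendsto_nhdsWithin_of_tendsto_nhds_of_eventually_within _ ht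
    (Eventually.of_forall ht0)

lemma dsub_eq_of_tendsto {ψ : E → ℝ} {z w : E} {L : ℝ}
    (h : Tendsto (fun p : ℝ × E => (ψ (z + p.1 • p.2) - ψ z) / p.1) (quotFilter w) (𝓝 L)) :
    dsub ψ z w = (L : EReal) := by
  have : Tendsto (fun p : ℝ × E => (((ψ (z + p.1 • p.2) - ψ z) / p.1 : ℝ) : EReal))
      (quotFilter w) (𝓝 (L : EReal)) :=
    (continuous_coe_real_ereal.tendsto L).comp h
  exact this.liminf_eq

lemma semidiff_bddAbove [ProperSpace E] {ψ : E → ℝ} {z : E} (hψ : SemidiffAt ψ z) :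
    ∃ r > (0:ℝ), ∃ M : ℝ, ∀ p ∈ closedBall z r, ψ p ≤ M := by
  by_contra hc
  push_neg at hc
  choose p hp hMp using fun k : ℕ => hc (1/(k+1)) (by positivity) (ψ z + k)
  have hpz : ∀ k, p k ≠ z := by
    intro k h
    have := hMp k
    rw [h] at this
    have : (k:ℝ) < 0 := by linarith
    exact (Nat.cast_nonneg k).not_gt this
  set t : ℕ → ℝ := fun k => ‖p k - z‖ with htdef
  have ht0 : ∀ k, 0 < t k := fun k => norm_pos_iff.2 (sub_ne_zero.2 (hpz k))
  have htle : ∀ k, t k ≤ 1/(k+1) := by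
    intro k; simpa [dist_eq_norm] using hp k
  have htlim : Tendsto t atTop (𝓝 0) := by
    refine squeeze_zero (fun k => (ht0 k).le) htle ?_
    exact tendsto_one_div_add_atTop_nhds_zero_nat
  set w : ℕ → E := fun k => (t k)⁻¹ • (p k - z) with hwdef
  have hws : ∀ k, w k ∈ sphere (0:E) 1 := by
    intro k
    simp [hwdef, norm_smul, abs_of_pos (ht0 k), inv_mul_cancel₀ (ht0 k).ne']
    exact inv_mul_cancel₀ (ht0 k).ne'
  obtain ⟨w₀, hw₀, φ, hφ, hconv⟩ := (isCompact_sphere (0:E) 1).tendsto_subseq hws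
  obtain ⟨L, hL⟩ := hψ w₀
  have hrecon : ∀ k, z + t k • w k = p k := by
    intro k; simp [hwdef, smul_inv_smul₀ (ht0 k).ne']
  have hseq : Tendsto (fun k => (ψ (p (φ k)) - ψ z) / t (φ k)) atTop (𝓝 L) :=
    (hL.comp (tendsto_quotFilter (fun k => ht0 (φ k))
      (htlim.comp hφ.tendsto_atTop) hconv)).congr
      (fun k => by simp [Function.comp, hrecon])
  have hbig : ∀ k : ℕ, (k:ℝ) ≤ (ψ (p (φ k)) - ψ z) / t (φ k) := by
    intro k
    have h1 : ((φ k : ℕ):ℝ) < ψ (p (φ k)) - ψ z := by linarith [hMp (φ k)]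
    have h2 : t (φ k) ≤ 1 := le_trans (htle (φ k)) (by
      rw [div_le_one (by positivity)]
      simp)
    have h3 : (k:ℝ) ≤ ((φ k : ℕ):ℝ) := by exact_mod_cast hφ.le_apply
    have h4 : (0:ℝ) ≤ ((φ k : ℕ):ℝ) := Nat.cast_nonneg _
    calc (k:ℝ) ≤ ((φ k : ℕ):ℝ) := h3
      _ ≤ ((φ k : ℕ):ℝ) / t (φ k) := by
          rw [le_div_iff₀ (ht0 _)]
          nlinarith
      _ ≤ (ψ (p (φ k)) - ψ z) / t (φ k) := by gcongr
  have hTop : Tendsto (fun k => (ψ (p (φ k)) - ψ z) / t (φ k)) atTop atTop :=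
    tendsto_atTop_mono hbig tendsto_natCast_atTop_atTop
  exact not_tendsto_nhds_of_tendsto_atTop hTop L hseq

end AuxLemmas

/-- First-order sufficient optimality conditions: strict first-order
conditions imply that `(xb, yb)` is a calm local minimax point. -/
theorem firstOrder_sufficient_calmLocalMinimax
    {n m : ℕ} (f : Eu n × Eu m → ℝ) (X : Set (Eu n)) (Y : Eu n → Set (Eu m))
    (xb : Eu n) (yb : Eu m) (hX : IsClosed X) (hY : ∀ x, IsClosed (Y x))
    (hxb : xb ∈ X) (hyb : yb ∈ Y xb)
    (hf : SemidiffAt f (xb, yb))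
    (hsemi : SetSemidiffAt Y xb yb) (hcalm : SetCalmAround Y xb yb)
    (hx : ∀ u ∈ tCone X xb, u ≠ 0 →
      (0 : EReal) < ⨆ h ∈ graphDeriv Y xb yb u, dsub f (xb, yb) (u, h))
    (hy : ∀ h ∈ tCone (Y xb) yb, h ≠ 0 → dsub (fun y => f (xb, y)) yb h < (0 : EReal)) :
    IsCalmLocalMinimaxPt f X Y xb yb := by
  obtain ⟨l, hl, U, hU, V, hV, hcalmP⟩ := hcalm
  obtain ⟨r, hr, M, hM⟩ := semidiff_bddAbove hf
  -- boundedness of images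
  have hbddA : ∀ (x : Eu n) (δ : ℝ), x ∈ closedBall xb δ → (l+1)*δ ≤ r →
      BddAbove ((fun y => f (x,y)) '' (Y x ∩ closedBall yb ((l+1)*δ))) := by
    intro x δ hxδ hδr
    refine ⟨M, ?_⟩
    rintro _ ⟨y, ⟨-, hyB⟩, rfl⟩
    apply hM
    have hδ0 : 0 ≤ δ := le_trans dist_nonneg (mem_closedBall.1 hxδ)
    rw [mem_closedBall, Prod.dist_eq]
    refine max_le ?_ (le_trans (mem_closedBall.1 hyB) hδr)
    refine le_trans (mem_closedBall.1 hxδ) (le_trans ?_ hδr)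
    nlinarith
  -- Claim 1 : local maximality in y
  have claim1 : ∃ δ₁ > (0:ℝ), ∀ y ∈ Y xb ∩ closedBall yb δ₁, f (xb, y) ≤ f (xb, yb) := by
    by_contra hc
    push_neg at hc
    choose ys hys hfy using fun k : ℕ => hc (1/(k+1)) (by positivity)
    have hy0 : ∀ k, ys k ≠ yb := by
      intro k h
      have := hfy k
      rw [h] at this
      exact lt_irrefl _ this
    set t : ℕ → ℝ := fun k => ‖ys k - yb‖ with htdef
    have ht0 : ∀ k, 0 < t k := fun k => norm_pos_iff.2 (sub_ne_zero.2 (hy0 k))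
    have htle : ∀ k, t k ≤ 1/(k+1) := by
      intro k
      have := (hys k).2
      simpa [dist_eq_norm] using this
    have htlim : Tendsto t atTop (𝓝 0) :=
      squeeze_zero (fun k => (ht0 k).le) htle tendsto_one_div_add_atTop_nhds_zero_nat
    set hk : ℕ → Eu m := fun k => (t k)⁻¹ • (ys k - yb) with hkdef
    have hks : ∀ k, hk k ∈ sphere (0:Eu m) 1 := by
      intro k
      simp [hkdef, norm_smul, abs_of_pos (ht0 k), inv_mul_cancel₀ (ht0 k).ne']
      exact inv_mul_cancel₀ (ht0 k).ne'
    obtain ⟨h, hhs, φ, hφ, hconv⟩ := (isCompact_sphere (0:Eu m) 1).tendsto_subseq hks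
    have hne : h ≠ 0 := by
      intro e
      rw [e] at hhs
      simp at hhs
    have hrecon : ∀ k, yb + t k • hk k = ys k := by
      intro k; simp [hkdef, smul_inv_smul₀ (ht0 k).ne']
    have hmem : h ∈ tCone (Y xb) yb := by
      refine ⟨t ∘ φ, hk ∘ φ, fun k => ht0 _, htlim.comp hφ.tendsto_atTop, hconv, ?_⟩
      intro k
      simp only [Function.comp]
      rw [hrecon]
      exact (hys (φ k)).1
    have hneg := hy h hmem hne
    obtain ⟨L, hL⟩ := hf ((0 : Eu n), h)
    have hm : Tendsto (fun p : ℝ × Eu m => (p.1, ((0:Eu n), p.2)))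
        (quotFilter h) (quotFilter ((0:Eu n), h)) := by
      refine Tendsto.prodMk tendsto_fst ?_
      exact ((Continuous.tendsto (by continuity) h)).comp tendsto_snd
    have hg : Tendsto (fun p : ℝ × Eu m => (f (xb, yb + p.1 • p.2) - f (xb,yb)) / p.1)
        (quotFilter h) (𝓝 L) := by
      refine (hL.comp hm).congr ?_
      intro p
      simp [Function.comp, Prod.smul_mk, Prod.mk_add_mk]
    have hdsub : dsub (fun y => f (xb,y)) yb h = (L : EReal) := dsub_eq_of_tendsto hg
    have hLneg : L < 0 := by
      rw [hdsub] at hneg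
      exact_mod_cast hneg
    have hseq : Tendsto (fun k => (f (xb, ys (φ k)) - f (xb,yb)) / t (φ k)) atTop (𝓝 L) :=
      (hg.comp (tendsto_quotFilter (fun k => ht0 (φ k))
        (htlim.comp hφ.tendsto_atTop) hconv)).congr
        (fun k => by simp [Function.comp, hrecon])
    have hge : (0:ℝ) ≤ L :=
      ge_of_tendsto' hseq (fun k => div_nonneg (by linarith [hfy (φ k)]) (ht0 _).le)
    linarith
  -- Claim 2 : local attainability in x
  have claim2 : ∃ δ₂ > (0:ℝ), ∀ δ ∈ Ioc (0:ℝ) δ₂, ∀ x ∈ X ∩ closedBall xb δ,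
      f (xb, yb) ≤ maxVal f x (Y x ∩ closedBall yb ((l+1)*δ)) := by
    by_contra hc
    push_neg at hc
    have hrl : 0 < r/(l+1) := by positivity
    choose δs hδs xs hxs hmax using
      fun k : ℕ => hc (min (1/(k+1)) (r/(l+1))) (lt_min (by positivity) hrl)
    have hδpos : ∀ k, 0 < δs k := fun k => (hδs k).1
    have hδle : ∀ k, δs k ≤ 1/(k+1) := fun k => le_trans (hδs k).2 (min_le_left _ _)
    have hδr : ∀ k, (l+1)*δs k ≤ r := by
      intro k
      have h1 := le_trans (hδs k).2 (min_le_right _ _)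
      rw [le_div_iff₀ (by linarith)] at h1
      linarith
    have hxne : ∀ k, xs k ≠ xb := by
      intro k he
      have hybmem : yb ∈ Y (xs k) ∩ closedBall yb ((l+1)*δs k) := by
        rw [he]
        exact ⟨hyb, mem_closedBall_self (by nlinarith [hδpos k])⟩
      have hle := le_csSup (hbddA (xs k) (δs k) (hxs k).2 (hδr k)) ⟨yb, hybmem, rfl⟩
      have hmk := hmax k
      rw [he] at hle hmk
      unfold maxVal at hmk
      exact absurd hle (not_le.2 hmk)
    set t : ℕ → ℝ := fun k => ‖xs k - xb‖ with htdef
    have ht0 : ∀ k, 0 < t k := fun k => norm_pos_iff.2 (sub_ne_zero.2 (hxne k))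
    have htδ : ∀ k, t k ≤ δs k := by
      intro k
      have := (hxs k).2
      simpa [dist_eq_norm] using this
    have htlim : Tendsto t atTop (𝓝 0) :=
      squeeze_zero (fun k => (ht0 k).le) (fun k => le_trans (htδ k) (hδle k))
        tendsto_one_div_add_atTop_nhds_zero_nat
    set uk : ℕ → Eu n := fun k => (t k)⁻¹ • (xs k - xb) with hukdef
    have huks : ∀ k, uk k ∈ sphere (0:Eu n) 1 := by
      intro k
      simp [hukdef, norm_smul, abs_of_pos (ht0 k), inv_mul_cancel₀ (ht0 k).ne']
      exact inv_mul_cancel₀ (ht0 k).ne'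
    obtain ⟨u, hus, φ, hφ, hconv⟩ := (isCompact_sphere (0:Eu n) 1).tendsto_subseq huks
    have hune : u ≠ 0 := by
      intro e
      rw [e] at hus
      simp at hus
    have hrecon : ∀ k, xb + t k • uk k = xs k := by
      intro k; simp [hukdef, smul_inv_smul₀ (ht0 k).ne']
    have humem : u ∈ tCone X xb := by
      refine ⟨t ∘ φ, uk ∘ φ, fun k => ht0 _, htlim.comp hφ.tendsto_atTop, hconv, ?_⟩
      intro k
      simp only [Function.comp]
      rw [hrecon]
      exact (hxs (φ k)).1
    have hsup := hx u humem hune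
    rw [lt_iSup_iff] at hsup
    obtain ⟨h0, hh0⟩ := hsup
    rw [lt_iSup_iff] at hh0
    obtain ⟨hmemG, hpos⟩ := hh0
    have hh0' : h0 ∈ innerDeriv Y xb yb u := by rw [← hsemi u]; exact hmemG
    obtain ⟨h', hh'conv, hh'mem⟩ := hh0' (t ∘ φ) (uk ∘ φ) (fun k => ht0 _)
      (htlim.comp hφ.tendsto_atTop) hconv
    obtain ⟨L, hL⟩ := hf (u, h0)
    have hLpos : 0 < L := by
      have hd := dsub_eq_of_tendsto hL
      rw [hd] at hpos
      exact_mod_cast hpos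
    have hseq : Tendsto (fun k => (f (xs (φ k), yb + t (φ k) • h' k) - f (xb,yb)) / t (φ k))
        atTop (𝓝 L) := by
      refine (hL.comp (tendsto_quotFilter (fun k => ht0 (φ k))
        (htlim.comp hφ.tendsto_atTop) (hconv.prodMk_nhds hh'conv))).congr ?_
      intro k
      simp only [Function.comp, Prod.smul_mk, Prod.mk_add_mk]
      rw [hrecon]
    have E1 : ∀ᶠ k in atTop,
        0 < (f (xs (φ k), yb + t (φ k) • h' k) - f (xb,yb)) / t (φ k) :=
      hseq.eventually (eventually_gt_nhds hLpos)
    have hxsconv : Tendsto (fun k => xs (φ k)) atTop (𝓝 xb) := by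
      rw [tendsto_iff_dist_tendsto_zero]
      refine (htlim.comp hφ.tendsto_atTop).congr ?_
      intro k
      simp [Function.comp, dist_eq_norm]
      rfl
    have E2 : ∀ᶠ k in atTop, xs (φ k) ∈ U := hxsconv hU
    have hy'conv : Tendsto (fun k => yb + t (φ k) • h' k) atTop (𝓝 yb) := by
      have hz : Tendsto (fun k => t (φ k) • h' k) atTop (𝓝 ((0:ℝ) • h0)) :=
        (htlim.comp hφ.tendsto_atTop).smul hh'conv
      have := (tendsto_const_nhds : Tendsto (fun _ : ℕ => yb) atTop (𝓝 yb)).add hz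
      simpa using this
    have E3 : ∀ᶠ k in atTop, yb + t (φ k) • h' k ∈ V := hy'conv hV
    obtain ⟨k, ⟨hk1, hk2⟩, hk3⟩ := ((E1.and E2).and E3).exists
    set y' : Eu m := yb + t (φ k) • h' k with hy'def
    have hy'Y : y' ∈ Y (xs (φ k)) := by
      have := hh'mem k
      simp only [Function.comp] at this
      rwa [hrecon] at this
    have hcalmk : ‖y' - yb‖ ≤ l * ‖xs (φ k) - xb‖ := hcalmP _ hk2 y' ⟨hy'Y, hk3⟩
    have hy'B : y' ∈ closedBall yb ((l+1)*δs (φ k)) := by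
      rw [mem_closedBall, dist_eq_norm]
      have h6 := htδ (φ k)
      have h7 := hδpos (φ k)
      have h8 := ht0 (φ k)
      nlinarith
    have hfy' : f (xb,yb) < f (xs (φ k), y') := by
      rcases div_pos_iff.1 hk1 with ⟨ha, _⟩ | ⟨_, hb⟩
      · linarith
      · linarith [ht0 (φ k)]
    have hle := le_csSup (hbddA (xs (φ k)) (δs (φ k)) (hxs (φ k)).2 (hδr (φ k)))
      ⟨y', ⟨hy'Y, hy'B⟩, rfl⟩
    have hmk := hmax (φ k)
    unfold maxVal at hmk
    exact absurd hle (not_le.2 (lt_trans hmk hfy'))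
  -- Assembly
  obtain ⟨δ₁, hδ₁, hC1⟩ := claim1
  obtain ⟨δ₂, hδ₂, hC2⟩ := claim2
  refine ⟨hxb, hyb, min δ₁ δ₂, lt_min hδ₁ hδ₂, fun δ => (l+1)*|δ|,
    fun δ => by positivity, ?_, ⟨l+1, by linarith, fun δ hδ => ?_⟩, ?_⟩
  · have hcont : Tendsto (fun δ : ℝ => (l+1)*|δ|) (𝓝 0) (𝓝 ((l+1)*|(0:ℝ)|)) :=
      (continuous_const.mul continuous_abs).tendsto 0
    simpa using hcont.mono_left nhdsWithin_le_nhds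
  · simp only []
    rw [abs_of_nonneg hδ]
  · intro δ hδ x hx y hy
    constructor
    · exact hC1 y ⟨hy.1, closedBall_subset_closedBall
        (le_trans hδ.2 (min_le_left _ _)) hy.2⟩
    · have h9 := hC2 δ ⟨hδ.1, le_trans hδ.2 (min_le_right _ _)⟩ x hx
      simpa [abs_of_pos hδ.1] using h9
end
end
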